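/- Let d ≥ 2 and n ≥ 1 be integers, let u, v ∈ [0,1]^n, and let ρ(u), ρ(v) be the corresponding qudit-encoded pure-state density matrices. If ‖ρ(u) − ρ(v)‖₁ ≤ c for some c ∈ [0, 2], then ∑_{i=1}^n |u_i − v_i| ≤ (2n/π) · arccos( (1 − c/2)^{1/((d−1)n)} ). -/

import Mathlib

/-!
The encoded states are real unit vectors with overlap
`F = ∏ᵢ cos^(d-1)(π (uᵢ - vᵢ) / 2)`, by the binomial theorem in each tensor factor.
For unit vectors `x, y` the difference `A = x x* - y y*` satisfies `A³ = (1 - |⟪x, y⟫|²) A`,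
so `√(A²)` is an explicit multiple of `A²` and the trace distance of pure states is
`2 √(1 - F²)`; a trace distance at most `c` therefore forces `F ≥ 1 - c/2`.
Finally, AM-GM followed by Jensen for the concave cosine on `[0, π/2]` gives
`(∏ᵢ cos θᵢ)^(1/n) ≤ cos (mean θ)`, and `arccos` inverts this into the `ℓ¹` bound.
-/

open MeasureTheory Metric Finset
open scoped ComplexOrder

noncomputable section

/-- The positive semidefinite square root of a positive semidefinite matrix
(the definition `Matrix.PosSemidef.sqrt` of the older Mathlib, since removed). -/
def Matrix.PosSemidef.sqrt {n : Type*} [Fintype n] [DecidableEq n] {𝕜 : Type*} [RCLike 𝕜]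
    {A : Matrix n n 𝕜} (hA : A.PosSemidef) : Matrix n n 𝕜 :=
  (hA.1.eigenvectorUnitary : Matrix n n 𝕜) *
    Matrix.diagonal ((↑) ∘ (Real.sqrt ·) ∘ hA.1.eigenvalues) *
    (star hA.1.eigenvectorUnitary : Matrix n n 𝕜)

/-- Trace norm of a complex square matrix: the trace of the positive semidefinite
square root of `Aᴴ * A`. -/
def traceNorm {m : Type*} [Fintype m] [DecidableEq m] (A : Matrix m m ℂ) : ℝ :=
  ((Matrix.posSemidef_conjTranspose_mul_self A).sqrt.trace).re

/-- Qudit encoding of a pixel value `u ∈ [0,1]`: the `j`-th component (0-indexed) is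
`√(binom (d-1) j) · cos^{d-1-j}(πu/2) · sin^j(πu/2)`. -/
def quditVec (d : ℕ) (u : ℝ) : Fin d → ℂ := fun j =>
  (Real.sqrt ((d - 1).choose j) *
    Real.cos (Real.pi * u / 2) ^ (d - 1 - (j : ℕ)) *
    Real.sin (Real.pi * u / 2) ^ (j : ℕ) : ℝ)

/-- Encoded product pure state `|Φ(u)⟩ = φ_d(u_1) ⊗ ⋯ ⊗ φ_d(u_n)`, with `(ℂ^d)^{⊗n}`
realized as functions `(Fin n → Fin d) → ℂ`. -/
def encState (d n : ℕ) (u : Fin n → ℝ) : (Fin n → Fin d) → ℂ := fun f =>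
  ∏ i, quditVec d (u i) (f i)

/-- Density matrix `ρ(u) = |Φ(u)⟩⟨Φ(u)|` of the encoded state. -/
def encRho (d n : ℕ) (u : Fin n → ℝ) :
    Matrix (Fin n → Fin d) (Fin n → Fin d) ℂ := fun a b =>
  encState d n u a * star (encState d n u b)

namespace Matrix

variable {ι 𝕜 : Type*} [Fintype ι] [DecidableEq ι] [RCLike 𝕜]

open scoped MatrixOrder in
theorem PosSemidef.sqrt_eq_cfcSqrt {A : Matrix ι ι 𝕜} (hA : A.PosSemidef) :
    hA.sqrt = CFC.sqrt A := by
  rw [CFC.sqrt_eq_cfc, cfc_nnreal_eq_real _ A hA.nonneg, hA.1.cfc_eq]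
  simp [IsHermitian.cfc, PosSemidef.sqrt, Function.comp_def,
    max_eq_left (hA.eigenvalues_nonneg _)]

open scoped MatrixOrder in
theorem PosSemidef.sqrt_eq_of_mul_self_eq {A B : Matrix ι ι 𝕜} (hA : A.PosSemidef)
    (hB : B.PosSemidef) (h : B * B = A) : hA.sqrt = B := by
  rw [hA.sqrt_eq_cfcSqrt]
  exact CFC.sqrt_unique h hB.nonneg

theorem PosSemidef.sqrt_eq_smul_of_mul_self_eq_smul {A : Matrix ι ι 𝕜} (hA : A.PosSemidef)
    {t : ℝ} (ht : 0 ≤ t) (h : A * A = t • A) : hA.sqrt = (√t)⁻¹ • A := by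
  refine hA.sqrt_eq_of_mul_self_eq (hA.smul (inv_nonneg.2 (Real.sqrt_nonneg t))) ?_
  rcases ht.eq_or_lt with rfl | ht
  · have hA0 : A = 0 := conjTranspose_mul_self_eq_zero.1 (by rw [hA.1.eq]; rwa [zero_smul] at h)
    simp [hA0]
  · rw [smul_mul_smul_comm, h, smul_smul, ← mul_inv, ← sq, Real.sq_sqrt ht.le,
      inv_mul_cancel₀ ht.ne', one_smul]

end Matrix

section PureState

open Matrix

variable {ι : Type*} [Fintype ι] [DecidableEq ι]

open ComplexConjugate in
theorem traceNorm_vecMulVec_star_sub {x y : ι → ℂ} (hx : star x ⬝ᵥ x = 1)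
    (hy : star y ⬝ᵥ y = 1) :
    traceNorm (vecMulVec x (star x) - vecMulVec y (star y)) =
      2 * √(1 - ‖star x ⬝ᵥ y‖ ^ 2) := by
  set F := star x ⬝ᵥ y
  set t := 1 - ‖F‖ ^ 2
  set A := vecMulVec x (star x) - vecMulVec y (star y)
  have hyx : star y ⬝ᵥ x = conj F := star_dotProduct y x
  have htF : (t : ℂ) = 1 - F * conj F := by rw [RCLike.mul_conj]; push_cast [t]; rfl
  have hAH : Aᴴ = A := by simp [A]
  have hA3 : A * A * A = (t : ℂ) • A := by
    simp only [A, htF, sub_mul, mul_sub, smul_mul_assoc, vecMulVec_mul_vecMulVec, vecMulVec_smul,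
      hx, hy, hyx, one_smul, smul_smul]
    module
  have hM : Aᴴ * A * (Aᴴ * A) = t • (Aᴴ * A) := by
    rw [hAH, ← mul_assoc, hA3, smul_mul_assoc, Complex.coe_smul]
  have htr : (A * A).trace = (2 * t : ℝ) := by
    have htr1 (a b : ι → ℂ) : (vecMulVec a (star b)).trace = star b ⬝ᵥ a := by
      rw [trace_vecMulVec, dotProduct_comm]
    simp only [A, sub_mul, mul_sub, vecMulVec_mul_vecMulVec, vecMulVec_smul, trace_sub,
      trace_smul, htr1, hx, hy, hyx, smul_eq_mul, Complex.ofReal_mul, Complex.ofReal_ofNat, htF]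
    ring
  have hpsd := posSemidef_conjTranspose_mul_self A
  -- `‖⟪x, y⟫‖ ≤ 1` comes for free: `2 * t` is the trace of the positive semidefinite `Aᴴ * A`.
  have ht : 0 ≤ t := by
    have := hpsd.trace_nonneg
    rw [hAH, htr, Complex.zero_le_real] at this
    linarith
  rw [traceNorm, hpsd.sqrt_eq_smul_of_mul_self_eq_smul ht hM, hAH, trace_smul, htr,
    Complex.real_smul, ← Complex.ofReal_mul, Complex.ofReal_re,
    mul_left_comm, inv_mul_eq_div, Real.div_sqrt]

end PureState

open Matrix Real

theorem star_quditVec (d : ℕ) (a : ℝ) : star (quditVec d a) = quditVec d a := by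
  ext j
  simp only [quditVec, Pi.star_apply, Complex.star_def, Complex.conj_ofReal]

theorem quditVec_dotProduct {d : ℕ} (hd : d ≠ 0) (a b : ℝ) :
    quditVec d a ⬝ᵥ quditVec d b = ((cos (π * (a - b) / 2) ^ (d - 1) : ℝ) : ℂ) := by
  set ca := cos (π * a / 2)
  set sa := sin (π * a / 2)
  set cb := cos (π * b / 2)
  set sb := sin (π * b / 2)
  have hcos : cos (π * (a - b) / 2) = sa * sb + ca * cb := by
    rw [show π * (a - b) / 2 = π * a / 2 - π * b / 2 by ring, cos_sub]
    ring
  have hterm (j : ℕ) : √((d - 1).choose j) * ca ^ (d - 1 - j) * sa ^ j *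
      (√((d - 1).choose j) * cb ^ (d - 1 - j) * sb ^ j) =
      (sa * sb) ^ j * (ca * cb) ^ (d - 1 - j) * (d - 1).choose j := by
    linear_combination (ca * cb) ^ (d - 1 - j) * (sa * sb) ^ j *
      Real.mul_self_sqrt (Nat.cast_nonneg ((d - 1).choose j))
  rw [hcos, add_pow, Nat.sub_add_cancel (Nat.one_le_iff_ne_zero.2 hd),
    ← Fin.sum_univ_eq_sum_range]
  simp only [dotProduct, quditVec, ← Complex.ofReal_mul, ← Complex.ofReal_sum]
  exact congrArg _ (Finset.sum_congr rfl fun j _ => hterm j)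

theorem dotProduct_prod_eq_prod_dotProduct {ι κ R : Type*} [Fintype ι] [DecidableEq ι]
    [Fintype κ] [CommSemiring R] (f g : ι → κ → R) :
    (fun φ : ι → κ => ∏ i, f i (φ i)) ⬝ᵥ (fun φ => ∏ i, g i (φ i)) = ∏ i, f i ⬝ᵥ g i := by
  simp only [dotProduct, ← Finset.prod_mul_distrib]
  rw [Finset.prod_univ_sum, Fintype.piFinset_univ]

theorem star_encState (d n : ℕ) (u : Fin n → ℝ) : star (encState d n u) = encState d n u := by
  ext φ
  rw [Pi.star_apply, encState, star_prod]
  exact Finset.prod_congr rfl fun i _ => congrFun (star_quditVec d (u i)) (φ i)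

theorem encState_dotProduct {d : ℕ} (hd : d ≠ 0) (n : ℕ) (u v : Fin n → ℝ) :
    encState d n u ⬝ᵥ encState d n v = ((∏ i, cos (π * (u i - v i) / 2) ^ (d - 1) : ℝ) : ℂ) := by
  unfold encState
  rw [dotProduct_prod_eq_prod_dotProduct, Complex.ofReal_prod]
  exact Finset.prod_congr rfl fun i _ => quditVec_dotProduct hd (u i) (v i)

theorem encRho_eq_vecMulVec (d n : ℕ) (u : Fin n → ℝ) :
    encRho d n u = vecMulVec (encState d n u) (star (encState d n u)) := rfl

theorem prod_cos_rpow_inv_card_le_cos_mean {ι : Type*} [Fintype ι] [Nonempty ι] {θ : ι → ℝ}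
    (hθ : ∀ i, θ i ∈ Set.Icc 0 (π / 2)) :
    (∏ i, cos (θ i)) ^ (Fintype.card ι : ℝ)⁻¹ ≤ cos ((∑ i, θ i) / Fintype.card ι) := by
  have hcos : ∀ i, 0 ≤ cos (θ i) := fun i =>
    cos_nonneg_of_mem_Icc ⟨by linarith [(hθ i).1, pi_pos], (hθ i).2⟩
  have hamgm := geom_mean_le_arith_mean Finset.univ (fun _ => (1 : ℝ)) (fun i => cos (θ i))
    (fun _ _ => zero_le_one) (by simp [Fintype.card_pos]) (fun i _ => hcos i)
  have hjensen := (strictConcaveOn_cos_Icc.concaveOn).le_map_centerMass (t := Finset.univ)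
    (w := fun _ => (1 : ℝ)) (p := θ) (fun _ _ => zero_le_one) (by simp [Fintype.card_pos])
    (fun i _ => ⟨by linarith [(hθ i).1, pi_pos], (hθ i).2⟩)
  simp only [rpow_one, Finset.sum_const, Finset.card_univ, nsmul_eq_mul, mul_one, one_mul]
    at hamgm
  simp only [Finset.centerMass, Finset.sum_const, Finset.card_univ, nsmul_eq_mul, mul_one,
    smul_eq_mul, one_mul, Function.comp_apply] at hjensen
  exact hamgm.trans (by simpa only [div_eq_inv_mul] using hjensen)

theorem sum_le_card_mul_arccos_of_le_prod_cos_pow {ι : Type*} [Fintype ι] {θ : ι → ℝ}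
    (hθ : ∀ i, θ i ∈ Set.Icc 0 (π / 2)) {k : ℕ} (hk : k ≠ 0) {r : ℝ} (hr : 0 ≤ r)
    (hle : r ≤ ∏ i, cos (θ i) ^ k) :
    ∑ i, θ i ≤ Fintype.card ι * arccos (r ^ (1 / ((k : ℝ) * Fintype.card ι))) := by
  rcases isEmpty_or_nonempty ι with hι | hι
  · simp
  set N : ℝ := (Fintype.card ι : ℝ)
  have hN : 0 < N := Nat.cast_pos.2 Fintype.card_pos
  have hG : 0 ≤ ∏ i, cos (θ i) := Finset.prod_nonneg fun i _ =>
    cos_nonneg_of_mem_Icc ⟨by linarith [(hθ i).1, pi_pos], (hθ i).2⟩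
  have hmean : (∑ i, θ i) / N ∈ Set.Icc 0 π := by
    have hsum : ∑ i, θ i ≤ N * (π / 2) := by
      simpa [N, mul_comm] using Finset.sum_le_sum fun i (_ : i ∈ Finset.univ) => (hθ i).2
    refine ⟨div_nonneg (Finset.sum_nonneg fun i _ => (hθ i).1) hN.le, ?_⟩
    rw [div_le_iff₀ hN]
    nlinarith [pi_pos]
  have hroot : r ^ (1 / ((k : ℝ) * N)) ≤ cos ((∑ i, θ i) / N) := calc
    r ^ (1 / ((k : ℝ) * N)) ≤ ((∏ i, cos (θ i)) ^ k) ^ (1 / ((k : ℝ) * N)) := by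
      rw [Finset.prod_pow] at hle
      gcongr
    _ = (∏ i, cos (θ i)) ^ N⁻¹ := by
      rw [← rpow_natCast, ← rpow_mul hG]
      congr 1
      field_simp
    _ ≤ cos ((∑ i, θ i) / N) := prod_cos_rpow_inv_card_le_cos_mean hθ
  calc ∑ i, θ i = N * arccos (cos ((∑ i, θ i) / N)) := by
        rw [arccos_cos hmean.1 hmean.2]; field_simp
    _ ≤ N * arccos (r ^ (1 / ((k : ℝ) * N))) := by gcongr

theorem sum_abs_le_of_le_prod_cos_pow {ι : Type*} [Fintype ι] {x : ι → ℝ} (hx : ∀ i, |x i| ≤ 1)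
    {k : ℕ} (hk : k ≠ 0) {r : ℝ} (hr : 0 ≤ r) (hle : r ≤ ∏ i, cos (π * x i / 2) ^ k) :
    ∑ i, |x i| ≤ 2 * Fintype.card ι / π * arccos (r ^ (1 / ((k : ℝ) * Fintype.card ι))) := by
  have hθ : ∀ i, π * |x i| / 2 ∈ Set.Icc 0 (π / 2) := fun i =>
    ⟨by positivity, by nlinarith [hx i, pi_pos]⟩
  have hcos : ∀ i, cos (π * |x i| / 2) = cos (π * x i / 2) := fun i => by
    rw [← cos_abs (π * x i / 2), abs_div, abs_mul, abs_of_pos pi_pos, abs_two]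
  have key := sum_le_card_mul_arccos_of_le_prod_cos_pow hθ hk hr (by simpa only [hcos] using hle)
  rw [← Finset.sum_div, ← Finset.mul_sum] at key
  rw [div_mul_eq_mul_div, le_div_iff₀ pi_pos]
  linarith

theorem stmt3_general (d n : ℕ) (hd : 2 ≤ d)
    (u v : Fin n → ℝ) (hu : ∀ i, u i ∈ Set.Icc (0 : ℝ) 1) (hv : ∀ i, v i ∈ Set.Icc (0 : ℝ) 1)
    (c : ℝ) (hc : c ∈ Set.Icc (0 : ℝ) 2)
    (hle : traceNorm (encRho d n u - encRho d n v) ≤ c) :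
    ∑ i, |u i - v i| ≤ (2 * n / Real.pi) *
      Real.arccos ((1 - c / 2) ^ (1 / (((d : ℝ) - 1) * n) : ℝ)) := by
  have hd0 : d ≠ 0 := by omega
  have hx : ∀ i, |u i - v i| ≤ 1 := fun i =>
    abs_sub_le_iff.2 ⟨by linarith [(hu i).2, (hv i).1], by linarith [(hu i).1, (hv i).2]⟩
  set F := ∏ i, cos (π * (u i - v i) / 2) ^ (d - 1)
  have hcos (i : Fin n) : 0 ≤ cos (π * (u i - v i) / 2) := cos_nonneg_of_mem_Icc
    ⟨by nlinarith [abs_le.1 (hx i), pi_pos], by nlinarith [abs_le.1 (hx i), pi_pos]⟩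
  have hF0 : 0 ≤ F := Finset.prod_nonneg fun i _ => pow_nonneg (hcos i) _
  have hF1 : F ≤ 1 := Finset.prod_le_one (fun i _ => pow_nonneg (hcos i) _)
    fun i _ => pow_le_one₀ (hcos i) (cos_le_one _)
  have hunit (w : Fin n → ℝ) : star (encState d n w) ⬝ᵥ encState d n w = 1 := by
    rw [star_encState, encState_dotProduct hd0]
    simp
  have hdist : traceNorm (encRho d n u - encRho d n v) = 2 * √(1 - F ^ 2) := by
    rw [encRho_eq_vecMulVec, encRho_eq_vecMulVec,
      traceNorm_vecMulVec_star_sub (hunit u) (hunit v), star_encState,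
      encState_dotProduct hd0, Complex.norm_real, Real.norm_eq_abs, sq_abs]
  have hFc : 1 - c / 2 ≤ F := by
    have : 1 - F ≤ √(1 - F ^ 2) := le_sqrt_of_sq_le (by nlinarith)
    linarith
  have hcast : ((d - 1 : ℕ) : ℝ) = d - 1 := by rw [Nat.cast_sub (by omega), Nat.cast_one]
  simpa [hcast] using sum_abs_le_of_le_prod_cos_pow hx (by omega) (by linarith [hc.2]) hFc

/-- translation of a trace-norm bound between qudit-encoded states to
an `ℓ¹` bound between the encoding vectors. -/
theorem stmt3 (d n : ℕ) (hd : 2 ≤ d) (hn : 1 ≤ n)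
    (u v : Fin n → ℝ) (hu : ∀ i, u i ∈ Set.Icc (0 : ℝ) 1) (hv : ∀ i, v i ∈ Set.Icc (0 : ℝ) 1)
    (c : ℝ) (hc : c ∈ Set.Icc (0 : ℝ) 2)
    (hle : traceNorm (encRho d n u - encRho d n v) ≤ c) :
    ∑ i, |u i - v i| ≤ (2 * n / Real.pi) *
      Real.arccos ((1 - c / 2) ^ (1 / (((d : ℝ) - 1) * n) : ℝ)) :=
  stmt3_general d n hd u v hu hv c hc hle

end
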